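/- Let n ≥ 1 and a_i^{(α)} ∈ ℂⁿ for i ∈ {1,2}, α ∈ {1,2,3}, and set F_i(z) = Σ_{α=1}^3 a_i^{(α)} z^α. Assume condition (A)₄ holds and condition (B)_{4,c} holds for some constant c > 0, and suppose a₁⁽³⁾ = λ·e₁ for some real λ > 0 (e₁ the first standard basis vector of ℂⁿ), a₂⁽³⁾ = 0, and a₂⁽²⁾ = 0. Then c = 3, λ = 1, and there exist mutually orthogonal unit vectors e₂, e₃, e₄ ∈ ℂⁿ, each orthogonal to e₁, such that a₁⁽²⁾ = √3·e₂, a₁⁽¹⁾ = √3·e₃, and a₂⁽¹⁾ = e₄. (That is, the curve is unitarily congruent to V₀⁽¹⁾ ⊕ V₀⁽³⁾ ⊂ G(2,6).) -/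

import Mathlib

open scoped BigOperators
open Complex

noncomputable def hinner {m : ℕ} (u w : Fin m → ℂ) : ℂ :=
  ∑ i, u i * (starRingEnd ℂ) (w i)

noncomputable def gram {m k : ℕ} (v : Fin k → Fin m → ℂ) : ℂ :=
  Matrix.det (Matrix.of fun i j : Fin k => hinner (v i) (v j))

noncomputable def vOne {n : ℕ} (F : ℂ → Fin n → ℂ) (z : ℂ) : Fin (n + 2) → ℂ :=
  Fin.cons 1 (Fin.cons 0 (F z))

noncomputable def vTwo {n : ℕ} (F : ℂ → Fin n → ℂ) (z : ℂ) : Fin (n + 2) → ℂ :=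
  Fin.cons 0 (Fin.cons 1 (F z))

def IsPolyMap {n : ℕ} (F : ℂ → Fin n → ℂ) : Prop :=
  ∀ i : Fin n, ∃ p : Polynomial ℂ, ∀ z : ℂ, F z i = Polynomial.eval z p

def CondA {n : ℕ} (d : ℕ) (F₁ F₂ : ℂ → Fin n → ℂ) : Prop :=
  ∀ z : ℂ,
    1 + hinner (F₁ z) (F₁ z) + hinner (F₂ z) (F₂ z) +
      (hinner (F₁ z) (F₁ z) * hinner (F₂ z) (F₂ z) -
        hinner (F₁ z) (F₂ z) * (starRingEnd ℂ) (hinner (F₁ z) (F₂ z))) =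
    (1 + (Complex.normSq z : ℂ)) ^ d

def CondB {n : ℕ} (d : ℕ) (c : ℝ) (F₁ F₂ : ℂ → Fin n → ℂ) : Prop :=
  ∀ z : ℂ,
    gram ![vOne F₁ z, vTwo F₂ z, deriv (vOne F₁) z, deriv (vTwo F₂) z] =
      (c : ℂ) * (1 + (Complex.normSq z : ℂ)) ^ (2 * d - 4)

noncomputable def F1t (t : ℝ) (z : ℂ) : Fin 4 → ℂ :=
  ![(|t - 2| : ℝ) * z ^ 3, (Real.sqrt t : ℝ) * z,
    ((Real.sqrt ((3 - t) / (4 - t)) * |t - 2| : ℝ)) * z ^ 2,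
    ((Real.sqrt (t / (4 - t)) : ℝ)) * z ^ 2]

noncomputable def F2t (t : ℝ) (z : ℂ) : Fin 4 → ℂ :=
  ![(Real.sqrt (3 - t) : ℝ) * z ^ 2, 0, (Real.sqrt (4 - t) : ℝ) * z, 0]

noncomputable def v1t (t : ℝ) (z : ℂ) : Fin 6 → ℂ := vOne (F1t t) z

noncomputable def v2t (t : ℝ) (z : ℂ) : Fin 6 → ℂ := vTwo (F2t t) z


/-!
Write `F₁ = z a₁ + z² a₂ + z³ a₃` and `F₂ = z b`. Both conditions are identities between
polynomials in `z` and `z̄`, and such an identity holds coefficientwise (substituting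
`z = x + iy` gives a polynomial vanishing on `ℝ²`). Since `F₂` is parallel to `F₂' = b`, the Gram
determinant in (B) collapses to `‖F₁' ∧ b‖² + ‖F₁ ∧ F₁' ∧ b‖²`, where
`F₁ ∧ F₁' = z² (a₁ ∧ a₂ + 2z a₁ ∧ a₃ + z² a₂ ∧ a₃)`.

The low coefficients of (A) give `⟨a₁, a₂⟩ = ⟨a₁, a₃⟩ = 0`, the `z̄` coefficient of (B) then gives
`⟨a₂, a₃⟩ = 0`, and (A) gives `⟨a₁, b⟩⟨b, a₃⟩ = ⟨a₂, b⟩⟨b, a₃⟩ = 0`. Put `U = |⟨a₃, b⟩|²`.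
Comparing the `|z|⁶` and `|z|⁸` coefficients of (B) with those of (A) yields `c U = c (3 - c)` and
`(6 - c) U = c U`, hence `(3 - c)² = 0`. So `c = 3` and `U = 0`, and the remaining coefficients
give the norms and `⟨a₁, b⟩ = ⟨a₂, b⟩ = 0`.
-/

section HermitianInner

variable {m : ℕ}

@[simp]
theorem hinner_add_left (u v w : Fin m → ℂ) : hinner (u + v) w = hinner u w + hinner v w := by
  simp [hinner, add_mul, Finset.sum_add_distrib]

@[simp]
theorem hinner_add_right (u v w : Fin m → ℂ) : hinner u (v + w) = hinner u v + hinner u w := by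
  simp [hinner, mul_add, Finset.sum_add_distrib]

@[simp]
theorem hinner_smul_left (r : ℂ) (u w : Fin m → ℂ) : hinner (r • u) w = r * hinner u w := by
  simp [hinner, Finset.mul_sum, mul_assoc]

@[simp]
theorem hinner_smul_right (r : ℂ) (u w : Fin m → ℂ) :
    hinner u (r • w) = starRingEnd ℂ r * hinner u w := by
  simp [hinner, Finset.mul_sum, mul_left_comm]

@[simp]
theorem conj_hinner (u w : Fin m → ℂ) : starRingEnd ℂ (hinner u w) = hinner w u := by
  simp [hinner, mul_comm]

@[simp]
theorem hinner_cons (x y : ℂ) (u w : Fin m → ℂ) :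
    hinner (Fin.cons x u : Fin (m + 1) → ℂ) (Fin.cons y w) = x * starRingEnd ℂ y + hinner u w := by
  simp [hinner, Fin.sum_univ_succ]

theorem hinner_eq_zero_comm {u w : Fin m → ℂ} : hinner u w = 0 ↔ hinner w u = 0 := by
  rw [← conj_hinner, map_eq_zero]

theorem hinner_eq_zero_of_mul_hinner_eq_zero {u w : Fin m → ℂ}
    (h : hinner u w * hinner w u = 0) : hinner u w = 0 := by
  rwa [← conj_hinner u w, Complex.mul_conj, Complex.ofReal_eq_zero, Complex.normSq_eq_zero] at h

theorem hinner_inv_sqrt_smul_self {u : Fin m → ℂ} {r : ℝ} (hr : 0 < r) (h : hinner u u = r) :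
    hinner (((√r : ℝ) : ℂ)⁻¹ • u) (((√r : ℝ) : ℂ)⁻¹ • u) = 1 := by
  have hsq : ((√r : ℝ) : ℂ) * (√r : ℝ) = r := by
    rw [← Complex.ofReal_mul, Real.mul_self_sqrt hr.le]
  have hne : ((√r : ℝ) : ℂ) ≠ 0 := by exact_mod_cast (Real.sqrt_pos.mpr hr).ne'
  rw [hinner_smul_left, hinner_smul_right, map_inv₀, Complex.conj_ofReal, h, ← hsq]
  field_simp

end HermitianInner

section Gram

variable {m : ℕ}

/-- The inner product of `v 0 ∧ ⋯ ∧ v (k-1)` and `w 0 ∧ ⋯ ∧ w (k-1)`. -/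
noncomputable def gramPair {k : ℕ} (v w : Fin k → Fin m → ℂ) : ℂ :=
  Matrix.det (Matrix.of fun i j => hinner (v i) (w j))

@[simp]
theorem gramPair_self {k : ℕ} (v : Fin k → Fin m → ℂ) : gramPair v v = gram v :=
  rfl

theorem gramPair_two (x₁ x₂ y₁ y₂ : Fin m → ℂ) :
    gramPair ![x₁, x₂] ![y₁, y₂] = hinner x₁ y₁ * hinner x₂ y₂ - hinner x₁ y₂ * hinner x₂ y₁ := by
  simp [gramPair, Matrix.det_fin_two]

theorem gramPair_three (x₁ x₂ x₃ y₁ y₂ y₃ : Fin m → ℂ) :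
    gramPair ![x₁, x₂, x₃] ![y₁, y₂, y₃] =
      hinner x₁ y₁ * hinner x₂ y₂ * hinner x₃ y₃ - hinner x₁ y₁ * hinner x₂ y₃ * hinner x₃ y₂
      - hinner x₁ y₂ * hinner x₂ y₁ * hinner x₃ y₃ + hinner x₁ y₂ * hinner x₂ y₃ * hinner x₃ y₁
      + hinner x₁ y₃ * hinner x₂ y₁ * hinner x₃ y₂ - hinner x₁ y₃ * hinner x₂ y₂ * hinner x₃ y₁ := by
  simp [gramPair, Matrix.det_fin_three]

theorem gram_two (x y : Fin m → ℂ) :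
    gram ![x, y] = hinner x x * hinner y y - hinner x y * hinner y x :=
  gramPair_two x y x y

theorem gram_three (x y w : Fin m → ℂ) :
    gram ![x, y, w] =
      hinner x x * hinner y y * hinner w w - hinner x x * hinner y w * hinner w y
      - hinner x y * hinner y x * hinner w w + hinner x y * hinner y w * hinner w x
      + hinner x w * hinner y x * hinner w y - hinner x w * hinner y y * hinner w x :=
  gramPair_three x y w x y w

theorem gram_eq_zero_of_eq_smul {k : ℕ} {v : Fin k → Fin m → ℂ} {i j : Fin k} (hij : i ≠ j)
    {r : ℂ} (h : v i = r • v j) : gram v = 0 := by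
  set G := Matrix.of fun i j => hinner (v i) (v j)
  have hrow : G i = r • G j := by
    funext l
    simp [G, h]
  change G.det = 0
  rw [← Matrix.updateRow_eq_self G i, hrow, Matrix.det_updateRow_smul,
    Matrix.det_zero_of_row_eq hij (by simp [hij.symm]), mul_zero]

theorem gram_cons_cons (x y p q : Fin m → ℂ) :
    gram ![(Fin.cons 1 (Fin.cons 0 x : Fin (m + 1) → ℂ) : Fin (m + 2) → ℂ),
      Fin.cons 0 (Fin.cons 1 y : Fin (m + 1) → ℂ), Fin.cons 0 (Fin.cons 0 p : Fin (m + 1) → ℂ),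
      Fin.cons 0 (Fin.cons 0 q : Fin (m + 1) → ℂ)] =
      gram ![p, q] + gram ![x, p, q] + gram ![y, p, q] + gram ![x, y, p, q] := by
  simp [gram, Matrix.det_succ_row_zero (n := 3), Fin.sum_univ_succ, Matrix.det_fin_three,
    Matrix.det_fin_two, Fin.succAbove]
  ring

end Gram

theorem Matrix.eq_zero_of_forall_sum_mul_pow_mul_pow {N : ℕ} {M : Matrix (Fin N) (Fin N) ℂ}
    (h : ∀ z w : ℂ, ∑ a, ∑ b, M a b * z ^ (a : ℕ) * w ^ (b : ℕ) = 0) : M = 0 := by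
  have hinj : Function.Injective fun j : Fin N => ((j : ℕ) : ℂ) :=
    Nat.cast_injective.comp Fin.val_injective
  have hrow : ∀ w : ℂ, (fun a => ∑ b, M a b * w ^ (b : ℕ)) = 0 := fun w =>
    Matrix.eq_zero_of_forall_index_sum_mul_pow_eq_zero hinj fun j => by
      simpa [Finset.sum_mul, mul_right_comm] using h j w
  funext a
  exact Matrix.eq_zero_of_forall_index_sum_mul_pow_eq_zero hinj fun j => congrFun (hrow j) a

open MvPolynomial in
theorem MvPolynomial.eq_zero_of_forall_eval_conj {p : MvPolynomial (Fin 2) ℂ}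
    (h : ∀ z : ℂ, eval ![z, starRingEnd ℂ z] p = 0) : p = 0 := by
  let g : Fin 2 → MvPolynomial (Fin 2) ℂ := ![X 0 + C Complex.I * X 1, X 0 - C Complex.I * X 1]
  have eval_bind (y : Fin 2 → ℂ) :
      eval y (bind₁ g p) = eval ![y 0 + Complex.I * y 1, y 0 - Complex.I * y 1] p := by
    rw [eval, eval₂Hom_bind₁]
    congr 2
    funext i
    fin_cases i <;> simp [g]
  have hq : bind₁ g p = 0 := by
    refine funext_set (fun _ => Set.range ((↑) : ℝ → ℂ))
      (fun _ => Set.infinite_range_of_injective Complex.ofReal_injective) fun y hy => ?_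
    obtain ⟨y₀, hy₀⟩ := hy 0 trivial
    obtain ⟨y₁, hy₁⟩ := hy 1 trivial
    rw [eval_bind, map_zero, ← hy₀, ← hy₁]
    simpa [Complex.conj_ofReal, sub_eq_add_neg] using h (y₀ + Complex.I * y₁)
  refine MvPolynomial.funext fun x => ?_
  have hx : ![(x 0 + x 1) / 2 + Complex.I * ((x 0 - x 1) / (2 * Complex.I)),
      (x 0 + x 1) / 2 - Complex.I * ((x 0 - x 1) / (2 * Complex.I))] = x := by
    funext i
    fin_cases i <;> simp <;> field_simp <;> ring
  simpa [hq, hx] using (eval_bind ![(x 0 + x 1) / 2, (x 0 - x 1) / (2 * Complex.I)]).symm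

open MvPolynomial in
theorem Matrix.eq_zero_of_forall_sum_mul_pow_mul_conj_pow {N : ℕ} {M : Matrix (Fin N) (Fin N) ℂ}
    (h : ∀ z : ℂ, ∑ a, ∑ b, M a b * z ^ (a : ℕ) * starRingEnd ℂ z ^ (b : ℕ) = 0) : M = 0 := by
  let p : MvPolynomial (Fin 2) ℂ := ∑ a, ∑ b, C (M a b) * X 0 ^ (a : ℕ) * X 1 ^ (b : ℕ)
  have hp : p = 0 := eq_zero_of_forall_eval_conj fun z => by simpa [p] using h z
  exact eq_zero_of_forall_sum_mul_pow_mul_pow fun z w => by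
    simpa [p] using congrArg (eval ![z, w]) hp

section Derivatives

variable {n : ℕ} {F : ℂ → Fin n → ℂ} {F' : Fin n → ℂ} {z : ℂ}

theorem hasDerivAt_vOne (h : HasDerivAt F F' z) :
    HasDerivAt (vOne F) (Fin.cons 0 (Fin.cons 0 F')) z := by
  rw [hasDerivAt_pi] at h ⊢
  exact Fin.cases (hasDerivAt_const z 1) (Fin.cases (hasDerivAt_const z 0) h)

theorem hasDerivAt_vTwo (h : HasDerivAt F F' z) :
    HasDerivAt (vTwo F) (Fin.cons 0 (Fin.cons 0 F')) z := by
  rw [hasDerivAt_pi] at h ⊢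
  exact Fin.cases (hasDerivAt_const z 0) (Fin.cases (hasDerivAt_const z 1) h)

theorem hasDerivAt_cubic (a₁ a₂ a₃ : Fin n → ℂ) (z : ℂ) :
    HasDerivAt (fun z => z • a₁ + z ^ 2 • a₂ + z ^ 3 • a₃)
      (a₁ + (2 * z) • a₂ + (3 * z ^ 2) • a₃) z := by
  have h₁ := (hasDerivAt_id z).smul_const a₁
  have h₂ := (hasDerivAt_pow 2 z).smul_const a₂
  have h₃ := (hasDerivAt_pow 3 z).smul_const a₃
  simpa using (h₁.fun_add h₂).fun_add h₃

end Derivatives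

section Cubic

variable {n : ℕ} (a₁ a₂ a₃ b : Fin n → ℂ)

theorem condA_cubic_coeffs
    (h : CondA 4 (fun z => z • a₁ + z ^ 2 • a₂ + z ^ 3 • a₃) (fun z => z • b)) :
    hinner a₁ a₁ + hinner b b = 4 ∧ hinner a₁ a₂ = 0 ∧ hinner a₁ a₃ = 0 ∧
      hinner a₂ a₂ + gram ![a₁, b] = 6 ∧ hinner a₂ a₃ + gramPair ![a₁, b] ![a₂, b] = 0 ∧
      gramPair ![a₁, b] ![a₃, b] = 0 ∧ hinner a₃ a₃ + gram ![a₂, b] = 4 ∧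
      gramPair ![a₂, b] ![a₃, b] = 0 ∧ gram ![a₃, b] = 1 := by
  let W : Fin 3 → Fin 3 → ℂ := fun i j => gramPair ![![a₁, a₂, a₃] i, b] ![![a₁, a₂, a₃] j, b]
  have hM := Matrix.eq_zero_of_forall_sum_mul_pow_mul_conj_pow (M := !![
    0, 0, 0, 0, 0;
    0, hinner a₁ a₁ + hinner b b - 4, hinner a₁ a₂, hinner a₁ a₃, 0;
    0, hinner a₂ a₁, hinner a₂ a₂ + W 0 0 - 6, hinner a₂ a₃ + W 0 1, W 0 2;
    0, hinner a₃ a₁, hinner a₃ a₂ + W 1 0, hinner a₃ a₃ + W 1 1 - 4, W 1 2;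
    0, 0, W 2 0, W 2 1, W 2 2 - 1]) fun z => by
    have hz := h z
    simp only [hinner_add_left, hinner_add_right, hinner_smul_left, hinner_smul_right,
      conj_hinner, map_pow, map_mul, map_add, Complex.conj_conj, ← Complex.mul_conj] at hz
    simp [Fin.sum_univ_five, W, gramPair_two]
    linear_combination hz
  have e := congr_fun₂ hM
  exact ⟨by simpa [sub_eq_zero] using e 1 1, by simpa using e 1 2, by simpa using e 1 3,
    by simpa [W, sub_eq_zero] using e 2 2, by simpa [W] using e 2 3, by simpa [W] using e 2 4,
    by simpa [W, sub_eq_zero] using e 3 3, by simpa [W] using e 3 4,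
    by simpa [W, sub_eq_zero] using e 4 4⟩

theorem gram_add_gram_eq_of_condB (c : ℝ)
    (h : CondB 4 c (fun z => z • a₁ + z ^ 2 • a₂ + z ^ 3 • a₃) (fun z => z • b)) (z : ℂ) :
    gram ![a₁ + (2 * z) • a₂ + (3 * z ^ 2) • a₃, b] +
        gram ![z • a₁ + z ^ 2 • a₂ + z ^ 3 • a₃, a₁ + (2 * z) • a₂ + (3 * z ^ 2) • a₃, b] =
      c * (1 + z * starRingEnd ℂ z) ^ 4 := by
  have hz := h z
  rw [(hasDerivAt_vOne (hasDerivAt_cubic a₁ a₂ a₃ z)).deriv,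
    (hasDerivAt_vTwo ((hasDerivAt_id' z).smul_const b)).deriv, one_smul] at hz
  rw [vOne, vTwo, gram_cons_cons,
    gram_eq_zero_of_eq_smul (v := ![z • b, _, b]) (i := 0) (j := 2) (by decide) rfl,
    gram_eq_zero_of_eq_smul (v := ![_, z • b, _, b]) (i := 1) (j := 3) (by decide) rfl,
    ← Complex.mul_conj] at hz
  simpa using hz

theorem condB_cubic_coeffs (c : ℝ)
    (h : CondB 4 c (fun z => z • a₁ + z ^ 2 • a₂ + z ^ 3 • a₃) (fun z => z • b)) :
    gram ![a₁, b] = c ∧ gramPair ![a₁, b] ![a₂, b] = 0 ∧ gram ![a₂, b] = c ∧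
      gram ![a₁, a₃, b] = c ∧ gram ![a₂, a₃, b] = c := by
  let W : Fin 3 → Fin 3 → ℂ := fun i j => gramPair ![![a₁, a₂, a₃] i, b] ![![a₁, a₂, a₃] j, b]
  let ω : Fin 3 → Fin 3 → Fin n → ℂ := ![![a₁, a₂, b], ![a₁, a₃, b], ![a₂, a₃, b]]
  let Ω : Fin 3 → Fin 3 → ℂ := fun i j => gramPair (ω i) (ω j)
  -- `W` carries `‖F₁' ∧ b‖²` and `Ω` carries `‖F₁ ∧ F₁' ∧ b‖²`; row `i`, column `j` is `zⁱ z̄ʲ`.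
  have hM := Matrix.eq_zero_of_forall_sum_mul_pow_mul_conj_pow (M := !![
    W 0 0 - c, 2 * W 0 1, 3 * W 0 2, 0, 0;
    2 * W 1 0, 4 * W 1 1 - 4 * c, 6 * W 1 2, 0, 0;
    3 * W 2 0, 6 * W 2 1, 9 * W 2 2 + Ω 0 0 - 6 * c, 2 * Ω 0 1, Ω 0 2;
    0, 0, 2 * Ω 1 0, 4 * Ω 1 1 - 4 * c, 2 * Ω 1 2;
    0, 0, Ω 2 0, 2 * Ω 2 1, Ω 2 2 - c]) fun z => by
    have hz := gram_add_gram_eq_of_condB a₁ a₂ a₃ b c h z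
    simp only [gram_two, gram_three, hinner_add_left, hinner_add_right,
      hinner_smul_left, hinner_smul_right, map_pow, map_mul, map_ofNat] at hz
    simp [Fin.sum_univ_five, W, Ω, ω, gramPair_two, gramPair_three, gram_three]
    linear_combination hz
  have e := congr_fun₂ hM
  exact ⟨by simpa [W, sub_eq_zero] using e 0 0, by simpa [W] using e 0 1,
    by simpa [W, sub_eq_zero] using e 1 1, by simpa [Ω, ω, sub_eq_zero] using e 3 3,
    by simpa [Ω, ω, sub_eq_zero] using e 4 4⟩

theorem orthonormal_of_condA_condB {c : ℝ} (hc : c ≠ 0)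
    (hA : CondA 4 (fun z => z • a₁ + z ^ 2 • a₂ + z ^ 3 • a₃) (fun z => z • b))
    (hB : CondB 4 c (fun z => z • a₁ + z ^ 2 • a₂ + z ^ 3 • a₃) (fun z => z • b)) :
    (c : ℂ) = 3 ∧ hinner a₁ a₁ = 3 ∧ hinner a₂ a₂ = 3 ∧ hinner a₃ a₃ = 1 ∧ hinner b b = 1 ∧
      hinner a₁ a₂ = 0 ∧ hinner a₁ a₃ = 0 ∧ hinner a₂ a₃ = 0 ∧
      hinner a₁ b = 0 ∧ hinner a₂ b = 0 ∧ hinner a₃ b = 0 := by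
  obtain ⟨hA11, hα, hβ, hA22, hA23, hA24, hA33, hA34, hA44⟩ := condA_cubic_coeffs a₁ a₂ a₃ b hA
  obtain ⟨hB00, hB01, hB11, hB13, hB23⟩ := condB_cubic_coeffs a₁ a₂ a₃ b c hB
  have hγ : hinner a₂ a₃ = 0 := by linear_combination hA23 - hB01
  have hβ' := hinner_eq_zero_comm.mp hβ
  have hγ' := hinner_eq_zero_comm.mp hγ
  simp only [gram_two, gram_three, gramPair_two, hβ, hβ', hγ, hγ', mul_zero, zero_mul, sub_zero,
    add_zero, zero_sub] at hA24 hA34 hA22 hA33 hA44 hB00 hB11 hB13 hB23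
  set A := hinner a₁ a₁
  set B := hinner a₂ a₂
  set C := hinner a₃ a₃
  set D := hinner b b
  set s := hinner a₁ b
  set s' := hinner b a₁
  set t := hinner a₂ b
  set t' := hinner b a₂
  set u := hinner a₃ b
  set u' := hinner b a₃
  have hC : C = 4 - c := by linear_combination hA33 - hB11
  have hB : B = 6 - c := by linear_combination hA22 - hB00
  have hAU : A * (u * u') = c * (u * u') := by
    linear_combination (u * u') * (hB13 - A * hA44) - C * s' * u * hA24
  have hU : u * u' = 3 - c := by
    refine mul_left_cancel₀ (Complex.ofReal_ne_zero.mpr hc) ?_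
    linear_combination -hAU - hB13 + C * hB00 + c * hC
  have hBU : B * (u * u') = c * (u * u') := by
    linear_combination (u * u') * (hB23 - B * hA44) - C * t' * u * hA34
  have hc3 : (c : ℂ) = 3 := by
    have h : (3 - (c : ℂ)) ^ 2 = 0 := by
      linear_combination (1 / 2) * hBU - (1 / 2) * (u * u') * hB - (3 - c) * hU
    linear_combination -(pow_eq_zero_iff two_ne_zero).mp h
  have hC1 : C = 1 := by linear_combination hC - hc3
  have hU0 : u * u' = 0 := by linear_combination hU - hc3
  have hD : D = 1 := by linear_combination hA44 - D * hC1 + hU0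
  have hA3 : A = 3 := by linear_combination hA11 - hD
  have hB3 : B = 3 := by linear_combination hB - hc3
  have hS : s * s' = 0 := by linear_combination -hB00 + D * hA3 + 3 * hD - hc3
  have hT : t * t' = 0 := by linear_combination -hB11 + D * hB3 + 3 * hD - hc3
  exact ⟨hc3, hA3, hB3, hC1, hD, hα, hβ, hγ, hinner_eq_zero_of_mul_hinner_eq_zero hS,
    hinner_eq_zero_of_mul_hinner_eq_zero hT, hinner_eq_zero_of_mul_hinner_eq_zero hU0⟩

end Cubic

theorem stmt8 (n : ℕ) (hn : 0 < n) (a11 a21 a12 a22 a13 a23 : Fin n → ℂ)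
    (c lam : ℝ) (hc : 0 < c) (hlam : 0 < lam)
    (ha13 : a13 = fun (j : Fin n) => if (j : ℕ) = 0 then ((lam : ℝ) : ℂ) else 0)
    (ha23 : a23 = 0) (ha22 : a22 = 0)
    (hA : CondA 4 (fun z => z • a11 + z ^ 2 • a12 + z ^ 3 • a13)
      (fun z => z • a21 + z ^ 2 • a22 + z ^ 3 • a23))
    (hB : CondB 4 c (fun z => z • a11 + z ^ 2 • a12 + z ^ 3 • a13)
      (fun z => z • a21 + z ^ 2 • a22 + z ^ 3 • a23)) :
    c = 3 ∧ lam = 1 ∧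
      ∃ e2 e3 e4 : Fin n → ℂ,
        hinner e2 e2 = 1 ∧ hinner e3 e3 = 1 ∧ hinner e4 e4 = 1 ∧
        hinner e2 e3 = 0 ∧ hinner e2 e4 = 0 ∧ hinner e3 e4 = 0 ∧
        hinner e2 (fun (j : Fin n) => if (j : ℕ) = 0 then (1 : ℂ) else 0) = 0 ∧
        hinner e3 (fun (j : Fin n) => if (j : ℕ) = 0 then (1 : ℂ) else 0) = 0 ∧
        hinner e4 (fun (j : Fin n) => if (j : ℕ) = 0 then (1 : ℂ) else 0) = 0 ∧
        a12 = ((Real.sqrt 3 : ℝ) : ℂ) • e2 ∧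
        a11 = ((Real.sqrt 3 : ℝ) : ℂ) • e3 ∧
        a21 = e4 := by
  subst ha22 ha23
  simp only [smul_zero, add_zero] at hA hB
  obtain ⟨hc3, h11, h22, h33, h44, h12, h13, h23, h14, h24, h34⟩ :=
    orthonormal_of_condA_condB a11 a12 a13 a21 hc.ne' hA hB
  set e₁ : Fin n → ℂ := fun j => if (j : ℕ) = 0 then 1 else 0
  have ha13' : a13 = (lam : ℂ) • e₁ := by
    rw [ha13]
    funext j
    simp [e₁]
  have he₁ : hinner e₁ e₁ = 1 := by
    obtain ⟨k, rfl⟩ := Nat.exists_eq_succ_of_ne_zero hn.ne'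
    simp [hinner, e₁]
  have hlam1 : lam = 1 := by
    rw [ha13', hinner_smul_left, hinner_smul_right, Complex.conj_ofReal, he₁, mul_one] at h33
    have : lam * lam = 1 := by exact_mod_cast h33
    nlinarith
  have horth : ∀ x, hinner x a13 = 0 → hinner x e₁ = 0 := fun x hx => by
    rw [ha13', hinner_smul_right, Complex.conj_ofReal] at hx
    exact (mul_eq_zero.mp hx).resolve_left (by exact_mod_cast hlam.ne')
  have hs : ((√3 : ℝ) : ℂ) ≠ 0 := by exact_mod_cast (Real.sqrt_pos.mpr three_pos).ne'
  refine ⟨by exact_mod_cast hc3, hlam1, _, _, a21,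
    hinner_inv_sqrt_smul_self three_pos (by exact_mod_cast h22),
    hinner_inv_sqrt_smul_self three_pos (by exact_mod_cast h11), h44, ?_, ?_, ?_,
    horth _ (by simp [h23]), horth _ (by simp [h13]), horth _ (hinner_eq_zero_comm.mp h34),
    ?_, ?_, rfl⟩
  · simp [hinner_eq_zero_comm.mp h12]
  · simp [h24]
  · simp [h14]
  · rw [smul_smul, mul_inv_cancel₀ hs, one_smul]
  · rw [smul_smul, mul_inv_cancel₀ hs, one_smul]
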